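/- arXiv:2303.00868 — 4 statements merged into one kernel-verified Lean document; each statement's English description precedes it below -/
import Mathlib

section
/- MRS-games are superadditive: for disjoint retailer coalitions R, F ⊆ N with R ∩ F = ∅ and disjoint supplier coalitions S, T ⊆ M with S ∩ T = ∅, it holds that v(R,S) + v(F,T) ≤ v(R ∪ F, S ∪ T). -/
open Finset

section MRSDefs

variable {N M : Type*}

/-- Total order of retailer `i` to all suppliers. -/
noncomputable def qiM [Fintype M] (q : N → M → ℝ) (i : N) : ℝ := ∑ j, q i j

/-- Total order of retailer coalition `R` to supplier `j`. -/
noncomputable def qRj (R : Finset N) (q : N → M → ℝ) (j : M) : ℝ := ∑ i ∈ R, q i j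

/-- Total order of retailer coalition `R` to supplier coalition `S`. -/
noncomputable def qRS (R : Finset N) (S : Finset M) (q : N → M → ℝ) : ℝ :=
  ∑ j ∈ S, ∑ i ∈ R, q i j

/-- Joint production cost of supplier coalition `S`: the minimum of the members' costs. -/
noncomputable def cmin (c : M → ℝ → ℝ) (S : Finset M) (x : ℝ) : ℝ :=
  if h : S.Nonempty then S.inf' h (fun j => c j x) else 0

/-- Profit of retailer `i`, within retailer coalition `R` cooperating with
supplier coalition `S`, at order vector `q`:
`Π_i(q_i, Ψ^S(q_R)) = p_i(q_iM) q_iM - ∑_{j∈S} c_S(q_RS) q_ij - ∑_{j∈M∖S} w_j(q_Rj) q_ij`. -/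
noncomputable def retProfit [Fintype M] [DecidableEq M] (p : N → ℝ → ℝ) (w c : M → ℝ → ℝ)
    (R : Finset N) (S : Finset M) (q : N → M → ℝ) (i : N) : ℝ :=
  p i (qiM q i) * qiM q i
    - ∑ j ∈ S, cmin c S (qRS R S q) * q i j
    - ∑ j ∈ Sᶜ, w j (qRj R q j) * q i j

/-- Feasible order vectors for retailer coalition `R` (bounded production). -/
def Feas [Fintype M] (qstar : N → ℝ) (qbar : N → M → ℝ) (R : Finset N)
    (q : N → M → ℝ) : Prop :=
  (∀ i j, 0 ≤ q i j) ∧ (∀ i ∈ R, qiM q i ≤ qstar i) ∧ (∀ i j, q i j ≤ qbar i j)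

/-- `q` is an optimal order vector for the coalition `(R,S)` (bounded production). -/
def IsOptimal [Fintype M] [DecidableEq M] (p : N → ℝ → ℝ) (w c : M → ℝ → ℝ)
    (qstar : N → ℝ) (qbar : N → M → ℝ) (R : Finset N) (S : Finset M)
    (q : N → M → ℝ) : Prop :=
  Feas qstar qbar R q ∧
    ∀ q', Feas qstar qbar R q' →
      ∑ i ∈ R, retProfit p w c R S q' i ≤ ∑ i ∈ R, retProfit p w c R S q i

/-- Feasible order vectors for retailer coalition `R` (unbounded production). -/
def FeasU [Fintype M] (qstar : N → ℝ) (R : Finset N) (q : N → M → ℝ) : Prop :=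
  (∀ i j, 0 ≤ q i j) ∧ (∀ i ∈ R, qiM q i ≤ qstar i)

/-- `q` is an optimal order vector for the coalition `(R,S)` (unbounded production). -/
def IsOptimalU [Fintype M] [DecidableEq M] (p : N → ℝ → ℝ) (w c : M → ℝ → ℝ)
    (qstar : N → ℝ) (R : Finset N) (S : Finset M) (q : N → M → ℝ) : Prop :=
  FeasU qstar R q ∧
    ∀ q', FeasU qstar R q' →
      ∑ i ∈ R, retProfit p w c R S q' i ≤ ∑ i ∈ R, retProfit p w c R S q i

/-- Standing assumptions of an MRS-situation on prices and costs. -/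
structure MRSAssumptions (p : N → ℝ → ℝ) (w c : M → ℝ → ℝ) : Prop where
  c_pos : ∀ j x, 0 ≤ x → 0 < c j x
  c_strictAnti : ∀ j, StrictAntiOn (c j) (Set.Ici 0)
  c_cont : ∀ j, ContinuousOn (c j) (Set.Ici 0)
  w_pos : ∀ j x, 0 ≤ x → 0 < w j x
  w_anti : ∀ j, AntitoneOn (w j) (Set.Ici 0)
  w_cont : ∀ j, ContinuousOn (w j) (Set.Ici 0)
  w_gt_c : ∀ j x, 0 ≤ x → c j x < w j x
  p_anti : ∀ i, AntitoneOn (p i) (Set.Ici 0)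
  p_cont : ∀ i, ContinuousOn (p i) (Set.Ici 0)

/-- The altruistic payoff of retailer `i`: its individual profit at an optimal
grand-coalition solution `qNM`. -/
noncomputable def altruistic [Fintype N] [Fintype M] [DecidableEq M]
    (p : N → ℝ → ℝ) (w c : M → ℝ → ℝ) (qNM : N → M → ℝ) (i : N) : ℝ :=
  retProfit p w c Finset.univ Finset.univ qNM i

end MRSDefs

section Aux

variable {N M : Type*}

lemma cmin_le_c {c : M → ℝ → ℝ} {S : Finset M} {j : M} (hj : j ∈ S) (x : ℝ) :
    cmin c S x ≤ c j x := by
  rw [cmin, dif_pos ⟨j, hj⟩]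
  exact Finset.inf'_le _ hj

lemma cmin_mono_set {c : M → ℝ → ℝ} {S S' : Finset M} (hS : S.Nonempty) (hsub : S ⊆ S')
    (x : ℝ) : cmin c S' x ≤ cmin c S x := by
  rw [cmin, cmin, dif_pos hS, dif_pos (hS.mono hsub)]
  apply Finset.le_inf'
  intro j hj
  exact Finset.inf'_le _ (hsub hj)

lemma cmin_anti {c : M → ℝ → ℝ} (hc : ∀ j, StrictAntiOn (c j) (Set.Ici 0))
    (S : Finset M) {x y : ℝ} (hx : 0 ≤ x) (hxy : x ≤ y) : cmin c S y ≤ cmin c S x := by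
  by_cases h : S.Nonempty
  · rw [cmin, cmin, dif_pos h, dif_pos h]
    apply Finset.le_inf'
    intro j hj
    exact le_trans (Finset.inf'_le _ hj)
      (((hc j).antitoneOn) (Set.mem_Ici.mpr hx) (Set.mem_Ici.mpr (hx.trans hxy)) hxy)
  · simp [cmin, h]

lemma retProfit_mono [Fintype M] [DecidableEq M] [DecidableEq N]
    (p : N → ℝ → ℝ) (w c : M → ℝ → ℝ) (hMRS : MRSAssumptions p w c)
    (R F : Finset N) (S T : Finset M) (hST : Disjoint S T)
    (qA q' : N → M → ℝ)
    (hA0 : ∀ i j, 0 ≤ qA i j) (h'0 : ∀ i j, 0 ≤ q' i j)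
    (hagree : ∀ i ∈ R, ∀ j, q' i j = qA i j)
    {i : N} (hi : i ∈ R) :
    retProfit p w c R S qA i ≤ retProfit p w c (R ∪ F) (S ∪ T) q' i := by
  classical
  have hX0 : 0 ≤ qRS R S qA :=
    Finset.sum_nonneg fun j _ => Finset.sum_nonneg fun i' _ => hA0 i' j
  have hRj0 : ∀ j, 0 ≤ qRj R qA j := fun j => Finset.sum_nonneg fun i' _ => hA0 i' j
  have hRj'0 : ∀ j, 0 ≤ qRj (R ∪ F) q' j := fun j =>
    Finset.sum_nonneg fun i' _ => h'0 i' j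
  have hRjle : ∀ j, qRj R qA j ≤ qRj (R ∪ F) q' j := by
    intro j
    have h1 : qRj R qA j = ∑ i' ∈ R, q' i' j :=
      Finset.sum_congr rfl fun i' hi' => (hagree i' hi' j).symm
    calc qRj R qA j = ∑ i' ∈ R, q' i' j := h1
      _ ≤ ∑ i' ∈ R ∪ F, q' i' j :=
          Finset.sum_le_sum_of_subset_of_nonneg Finset.subset_union_left
            (fun i' _ _ => h'0 i' j)
      _ = qRj (R ∪ F) q' j := rfl
  have hXY : qRS R S qA ≤ qRS (R ∪ F) (S ∪ T) q' := by
    rw [qRS, qRS]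
    calc ∑ j ∈ S, ∑ i' ∈ R, qA i' j
        ≤ ∑ j ∈ S, ∑ i' ∈ R ∪ F, q' i' j := by
          apply Finset.sum_le_sum
          intro j _
          have h1 : ∑ i' ∈ R, qA i' j = ∑ i' ∈ R, q' i' j :=
            Finset.sum_congr rfl fun i' hi' => (hagree i' hi' j).symm
          rw [h1]
          exact Finset.sum_le_sum_of_subset_of_nonneg Finset.subset_union_left
            (fun i' _ _ => h'0 i' j)
      _ ≤ ∑ j ∈ S ∪ T, ∑ i' ∈ R ∪ F, q' i' j :=
          Finset.sum_le_sum_of_subset_of_nonneg Finset.subset_union_left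
            (fun j _ _ => Finset.sum_nonneg fun i' _ => h'0 i' j)
  have hYj : ∀ j ∈ T, qRj R qA j ≤ qRS (R ∪ F) (S ∪ T) q' := by
    intro j hj
    calc qRj R qA j ≤ qRj (R ∪ F) q' j := hRjle j
      _ ≤ ∑ j' ∈ S ∪ T, qRj (R ∪ F) q' j' :=
          Finset.single_le_sum (fun j' _ => hRj'0 j') (Finset.mem_union_right S hj)
      _ = qRS (R ∪ F) (S ∪ T) q' := by rw [qRS]; rfl
  have hqiM : qiM q' i = qiM qA i := by
    rw [qiM, qiM]
    exact Finset.sum_congr rfl fun j _ => hagree i hi j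
  have hsplit : (Sᶜ : Finset M) = T ∪ (S ∪ T)ᶜ := by
    ext j
    simp only [Finset.mem_compl, Finset.mem_union]
    have hTS : j ∈ T → j ∉ S := fun h => Finset.disjoint_left.mp hST.symm h
    tauto
  have hd : Disjoint T ((S ∪ T)ᶜ : Finset M) :=
    disjoint_compl_right.mono_left Finset.subset_union_right
  rw [retProfit, retProfit, hsplit, Finset.sum_union hST, Finset.sum_union hd, hqiM]
  simp only [hagree i hi]
  have hS : ∀ j ∈ S,
      cmin c (S ∪ T) (qRS (R ∪ F) (S ∪ T) q') * qA i j ≤ cmin c S (qRS R S qA) * qA i j := by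
    intro j hj
    refine mul_le_mul_of_nonneg_right ?_ (hA0 i j)
    calc cmin c (S ∪ T) (qRS (R ∪ F) (S ∪ T) q')
        ≤ cmin c (S ∪ T) (qRS R S qA) := cmin_anti hMRS.c_strictAnti _ hX0 hXY
      _ ≤ cmin c S (qRS R S qA) := cmin_mono_set ⟨j, hj⟩ Finset.subset_union_left _
  have hT : ∀ j ∈ T,
      cmin c (S ∪ T) (qRS (R ∪ F) (S ∪ T) q') * qA i j ≤ w j (qRj R qA j) * qA i j := by
    intro j hj
    refine mul_le_mul_of_nonneg_right ?_ (hA0 i j)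
    calc cmin c (S ∪ T) (qRS (R ∪ F) (S ∪ T) q')
        ≤ c j (qRS (R ∪ F) (S ∪ T) q') := cmin_le_c (Finset.mem_union_right S hj) _
      _ ≤ c j (qRj R qA j) :=
          ((hMRS.c_strictAnti j).antitoneOn) (Set.mem_Ici.mpr (hRj0 j))
            (Set.mem_Ici.mpr ((hRj0 j).trans (hYj j hj))) (hYj j hj)
      _ ≤ w j (qRj R qA j) := (hMRS.w_gt_c j _ (hRj0 j)).le
  have hW : ∀ j ∈ ((S ∪ T)ᶜ : Finset M),
      w j (qRj (R ∪ F) q' j) * qA i j ≤ w j (qRj R qA j) * qA i j := fun j _ =>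
    mul_le_mul_of_nonneg_right
      ((hMRS.w_anti j) (Set.mem_Ici.mpr (hRj0 j)) (Set.mem_Ici.mpr (hRj'0 j)) (hRjle j))
      (hA0 i j)
  linarith [Finset.sum_le_sum hS, Finset.sum_le_sum hT, Finset.sum_le_sum hW]

end Aux

/-- Part (ii) of the Proposition: MRS-games are superadditive. -/
theorem stmt_6 {N M : Type*} [Fintype N] [Fintype M] [DecidableEq N] [DecidableEq M]
    (p : N → ℝ → ℝ) (w c : M → ℝ → ℝ) (qstar : N → ℝ) (qbar : N → M → ℝ)
    (hMRS : MRSAssumptions p w c)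
    (R F : Finset N) (hRF : Disjoint R F)
    (S T : Finset M) (hST : Disjoint S T)
    (qRS qFT qU : N → M → ℝ)
    (hqRS : IsOptimal p w c qstar qbar R S qRS)
    (hqFT : IsOptimal p w c qstar qbar F T qFT)
    (hqU : IsOptimal p w c qstar qbar (R ∪ F) (S ∪ T) qU) :
    (∑ i ∈ R, retProfit p w c R S qRS i) + (∑ i ∈ F, retProfit p w c F T qFT i) ≤
      ∑ i ∈ R ∪ F, retProfit p w c (R ∪ F) (S ∪ T) qU i := by
  classical
  obtain ⟨⟨hA0, hA1, hA2⟩, -⟩ := hqRS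
  obtain ⟨⟨hB0, hB1, hB2⟩, -⟩ := hqFT
  obtain ⟨-, hUopt⟩ := hqU
  set q' : N → M → ℝ := fun i j => if i ∈ F then qFT i j else qRS i j with hq'
  have h'0 : ∀ i j, 0 ≤ q' i j := by
    intro i j; by_cases h : i ∈ F <;> simp [hq', h, hA0 i j, hB0 i j]
  have hagreeR : ∀ i ∈ R, ∀ j, q' i j = qRS i j := by
    intro i hi j
    have : i ∉ F := fun hF => Finset.disjoint_left.mp hRF hi hF
    simp [hq', this]
  have hagreeF : ∀ i ∈ F, ∀ j, q' i j = qFT i j := by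
    intro i hi j; simp [hq', hi]
  have hfeas : Feas qstar qbar (R ∪ F) q' := by
    refine ⟨h'0, ?_, ?_⟩
    · intro i hi
      rcases Finset.mem_union.mp hi with h | h
      · have heq : qiM q' i = qiM qRS i := by
          rw [qiM, qiM]; exact Finset.sum_congr rfl fun j _ => hagreeR i h j
        rw [heq]; exact hA1 i h
      · have heq : qiM q' i = qiM qFT i := by
          rw [qiM, qiM]; exact Finset.sum_congr rfl fun j _ => hagreeF i h j
        rw [heq]; exact hB1 i h
    · intro i j; by_cases h : i ∈ F <;> simp [hq', h, hA2 i j, hB2 i j]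
  refine le_trans ?_ (hUopt q' hfeas)
  rw [Finset.sum_union hRF]
  apply add_le_add
  · exact Finset.sum_le_sum fun i hi =>
      retProfit_mono p w c hMRS R F S T hST qRS q' hA0 h'0 hagreeR hi
  · have hmain : ∀ i ∈ F,
        retProfit p w c F T qFT i ≤ retProfit p w c (F ∪ R) (T ∪ S) q' i := fun i hi =>
      retProfit_mono p w c hMRS F R T S hST.symm qFT q' hB0 h'0 hagreeF hi
    rw [Finset.union_comm R F, Finset.union_comm S T]
    exact Finset.sum_le_sum hmain
end

section
/- Uniqueness: if a single-valued solution φ on the class of MRS-games satisfies (EF), (SR), (RR), (PD) and (PP) with respect to a fixed optimal grand-coalition solution q^{(N,M)}, then φ equals the SC-allocation ξ: φ_i(v) = x_i^a(v) − β for i ∈ N and φ_j(v) = q_{Nj}^{(N,M)}·|N|·β / q_{NM}^{(N,M)} for j ∈ M, with β = min_{∅≠R⊆N, j∈M} (Σ_{i∈R} x_i^a(v) − v(R,M\{j}))/|R|. -/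
open Finset

/-- Uniqueness: any solution satisfying (EF), (SR), (RR), (PD) and (PP) with
respect to a fixed optimal grand-coalition solution equals the SC-allocation. -/
theorem stmt_12 {N M : Type*} [Fintype N] [Fintype M] [DecidableEq M]
    (p : N → ℝ → ℝ) (w c : M → ℝ → ℝ) (qstar : N → ℝ) (qbar : N → M → ℝ)
    (hMRS : MRSAssumptions p w c) (hN : Nonempty N)
    (v : Finset N → Finset M → ℝ)
    (hv : ∀ (R : Finset N) (S : Finset M), ∃ q,
      IsOptimal p w c qstar qbar R S q ∧ v R S = ∑ i ∈ R, retProfit p w c R S q i)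
    (qNM : N → M → ℝ)
    (hqNM : IsOptimal p w c qstar qbar Finset.univ Finset.univ qNM)
    (htot : 0 < qRS Finset.univ Finset.univ qNM)
    (β : ℝ)
    (hβ_le : ∀ (R : Finset N) (j : M), R.Nonempty →
      β ≤ ((∑ i ∈ R, altruistic p w c qNM i) - v R (Finset.univ.erase j)) / R.card)
    (hβ_mem : ∃ (R : Finset N) (j : M), R.Nonempty ∧
      β = ((∑ i ∈ R, altruistic p w c qNM i) - v R (Finset.univ.erase j)) / R.card)
    -- a candidate solution φ = (φN, φM)
    (φN : N → ℝ) (φM : M → ℝ)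
    -- (EF)
    (hEF : (∑ i, φN i) + (∑ j, φM j) = v Finset.univ Finset.univ)
    -- (SR)
    (hSR : ∀ (R : Finset N) (j : M), v R (Finset.univ.erase j) ≤ ∑ i ∈ R, φN i)
    -- (RR)
    (hRR : ∀ i : N, ∃ (R : Finset N) (j : M), i ∈ R ∧ R.Nonempty ∧
      φN i = altruistic p w c qNM i -
        ((∑ k ∈ R, altruistic p w c qNM k) - v R (Finset.univ.erase j)) / R.card)
    -- (PD)
    (hPD : ∀ i i' : N, φN i - φN i' =
      altruistic p w c qNM i - altruistic p w c qNM i')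
    -- (PP)
    (hPP : ∀ j j' : M, φM j * qRj Finset.univ qNM j' = φM j' * qRj Finset.univ qNM j) :
    (∀ i : N, φN i = altruistic p w c qNM i - β) ∧
    (∀ j : M, φM j = qRj Finset.univ qNM j * (Fintype.card N : ℝ) * β /
      qRS Finset.univ Finset.univ qNM) := by
  classical
  set A := altruistic p w c qNM with hA
  obtain ⟨i₀⟩ := hN
  set α := A i₀ - φN i₀ with hα
  have hαeq : ∀ i, φN i = A i - α := by
    intro i
    have := hPD i i₀
    simp only [hA] at this ⊢
    linarith
  -- α ≥ β via RR
  have hαβ : β ≤ α := by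
    obtain ⟨R, j, hiR, hne, hRR0⟩ := hRR i₀
    have h1 := hβ_le R j hne
    have : α = ((∑ k ∈ R, A k) - v R (Finset.univ.erase j)) / R.card := by
      rw [hα, hRR0]; ring
    linarith [this ▸ h1]
  -- α ≤ β via SR at minimizing pair
  have hβα : α ≤ β := by
    obtain ⟨R, j, hne, hβeq⟩ := hβ_mem
    have hSR0 := hSR R j
    have hsum : ∑ i ∈ R, φN i = (∑ i ∈ R, A i) - R.card * α := by
      rw [Finset.sum_congr rfl (fun i _ => hαeq i), Finset.sum_sub_distrib,
        Finset.sum_const, nsmul_eq_mul]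
    have hcard : (0:ℝ) < R.card := by
      exact_mod_cast Finset.card_pos.mpr hne
    rw [hβeq]
    rw [hsum] at hSR0
    rw [le_div_iff₀ hcard]
    linarith
  have hαβeq : α = β := le_antisymm hβα hαβ
  have hφN : ∀ i, φN i = A i - β := fun i => by rw [hαeq i, hαβeq]
  -- v univ univ = ∑ A
  have hvtot : v Finset.univ Finset.univ = ∑ i, A i := by
    obtain ⟨q, hopt, hveq⟩ := hv Finset.univ Finset.univ
    have h1 := hopt.2 qNM hqNM.1
    have h2 := hqNM.2 q hopt.1
    have : ∑ i, retProfit p w c Finset.univ Finset.univ q i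
        = ∑ i, retProfit p w c Finset.univ Finset.univ qNM i := le_antisymm h2 h1
    rw [hveq, this]; rfl
  -- ∑ φM = n β
  have hsumφM : ∑ j, φM j = (Fintype.card N : ℝ) * β := by
    have hsumN : ∑ i, φN i = (∑ i, A i) - (Fintype.card N : ℝ) * β := by
      rw [Finset.sum_congr rfl (fun i _ => hφN i), Finset.sum_sub_distrib,
        Finset.sum_const, nsmul_eq_mul, Finset.card_univ]
    have := hEF
    rw [hvtot, hsumN] at this
    linarith
  refine ⟨hφN, fun j => ?_⟩
  have hT : qRS Finset.univ Finset.univ qNM = ∑ j', qRj Finset.univ qNM j' := by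
    simp [qRS, qRj]
  have key : φM j * qRS Finset.univ Finset.univ qNM
      = qRj Finset.univ qNM j * ((Fintype.card N : ℝ) * β) := by
    rw [hT, Finset.mul_sum]
    rw [Finset.sum_congr rfl (fun j' _ => hPP j j')]
    rw [← Finset.sum_mul, hsumφM]; ring
  have hT0 : qRS Finset.univ Finset.univ qNM ≠ 0 := ne_of_gt htot
  rw [eq_div_iff hT0, key]
  ring
end

section
/- In an MRS-game with unbounded production capacity, the set of optimal suppliers is nonempty: there exists k ∈ M with v(N,{k}) = v(N,M). -/
open Finset

/-- Lemma: with unbounded production capacity there is always an optimal supplier,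
i.e. some `k ∈ M` with `v(N,{k}) = v(N,M)`. -/
theorem stmt_14 {N M : Type*} [Fintype N] [Fintype M] [DecidableEq M]
    (p : N → ℝ → ℝ) (w c : M → ℝ → ℝ) (qstar : N → ℝ)
    (hMRS : MRSAssumptions p w c) (hM : Nonempty M)
    (v : Finset N → Finset M → ℝ)
    (hv : ∀ (R : Finset N) (S : Finset M), ∃ q,
      IsOptimalU p w c qstar R S q ∧ v R S = ∑ i ∈ R, retProfit p w c R S q i) :
    ∃ k : M, v Finset.univ {k} = v Finset.univ Finset.univ := by
  obtain ⟨q, ⟨hqfeas, hqopt⟩, hvNN⟩ := hv Finset.univ Finset.univ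
  have hXuniv : (Finset.univ : Finset M).Nonempty := Finset.univ_nonempty
  set X : ℝ := qRS Finset.univ Finset.univ q with hX
  have hq0 : ∀ i j, 0 ≤ q i j := hqfeas.1
  have hX0 : 0 ≤ X := by
    apply Finset.sum_nonneg; intro j _; exact Finset.sum_nonneg fun i _ => hq0 i j
  obtain ⟨k, -, hk⟩ := Finset.exists_mem_eq_inf' hXuniv (fun j => c j X)
  refine ⟨k, ?_⟩
  obtain ⟨qk, ⟨hqkfeas, hqkopt⟩, hvk⟩ := hv Finset.univ {k}
  have hcminU : ∀ x : ℝ, cmin c Finset.univ x = Finset.univ.inf' hXuniv (fun j => c j x) := by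
    intro x; rw [cmin, dif_pos hXuniv]
  have hcmink : ∀ x : ℝ, cmin c ({k} : Finset M) x = c k x := by
    intro x; rw [cmin, dif_pos (Finset.singleton_nonempty k), Finset.inf'_singleton]
  -- the rerouted vector
  set q' : N → M → ℝ := fun i j => if j = k then qiM q i else 0 with hq'
  have hqiM0 : ∀ i, 0 ≤ qiM q i := fun i => Finset.sum_nonneg fun j _ => hq0 i j
  have hA : ∀ i, qiM q' i = qiM q i := by
    intro i; simp [qiM, hq']
  have hB : qRS Finset.univ ({k} : Finset M) q' = X := by
    rw [hX]
    simp only [qRS, hq', Finset.sum_singleton, if_pos rfl]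
    rw [Finset.sum_comm]
    simp [qiM]
  have hfeas' : FeasU qstar Finset.univ q' := by
    constructor
    · intro i j; simp only [hq']; split
      · exact hqiM0 i
      · exact le_rfl
    · intro i _; rw [hA]; exact hqfeas.2 i (Finset.mem_univ i)
  -- claim 1 : equal profits
  have hclaim1 : ∑ i, retProfit p w c Finset.univ ({k} : Finset M) q' i
      = ∑ i, retProfit p w c Finset.univ Finset.univ q i := by
    apply Finset.sum_congr rfl
    intro i _
    rw [retProfit, retProfit, hA, hB, hcmink, hcminU]
    have h1 : ∑ j ∈ ({k} : Finset M), c k X * q' i j = c k X * qiM q i := by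
      simp [hq']
    have h2 : ∑ j ∈ ({k} : Finset M)ᶜ, w j (qRj Finset.univ q' j) * q' i j = 0 := by
      apply Finset.sum_eq_zero; intro j hj
      rw [Finset.mem_compl, Finset.mem_singleton] at hj
      simp [hq', hj]
    have h3 : ∑ j ∈ (Finset.univ : Finset M),
        Finset.univ.inf' hXuniv (fun j => c j X) * q i j = c k X * qiM q i := by
      rw [← hk, ← Finset.mul_sum]; rfl
    have h4 : ∑ j ∈ (Finset.univ : Finset M)ᶜ, w j (qRj Finset.univ q j) * q i j = 0 := by
      simp
    rw [h1, h2, h3, h4]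
  -- claim 2 : for any feasible vector, singleton-coalition profit ≤ grand-coalition profit
  have hclaim2 : ∀ q₁ : N → M → ℝ, (∀ i j, 0 ≤ q₁ i j) →
      ∑ i, retProfit p w c Finset.univ ({k} : Finset M) q₁ i
      ≤ ∑ i, retProfit p w c Finset.univ Finset.univ q₁ i := by
    intro q₁ h10
    apply Finset.sum_le_sum
    intro i _
    rw [retProfit, retProfit]
    set Z : ℝ := qRS Finset.univ Finset.univ q₁ with hZ
    have hZ0 : 0 ≤ Z := Finset.sum_nonneg fun j _ => Finset.sum_nonneg fun i _ => h10 i j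
    have hRj0 : ∀ j, 0 ≤ qRj Finset.univ q₁ j := fun j => Finset.sum_nonneg fun i _ => h10 i j
    have hRjZ : ∀ j : M, qRj Finset.univ q₁ j ≤ Z := by
      intro j
      exact Finset.single_le_sum (f := fun j => qRj Finset.univ q₁ j)
        (fun j _ => hRj0 j) (Finset.mem_univ j)
    have hcost : ∀ j : M, cmin c Finset.univ Z ≤ c j Z := by
      intro j; rw [hcminU]; exact Finset.inf'_le _ (Finset.mem_univ j)
    have hkey : ∑ j ∈ (Finset.univ : Finset M), cmin c Finset.univ Z * q₁ i j
        ≤ ∑ j ∈ ({k} : Finset M), cmin c ({k} : Finset M) (qRS Finset.univ {k} q₁) * q₁ i j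
          + ∑ j ∈ ({k} : Finset M)ᶜ, w j (qRj Finset.univ q₁ j) * q₁ i j := by
      rw [← Finset.sum_add_sum_compl ({k} : Finset M)
        (fun j => cmin c Finset.univ Z * q₁ i j)]
      apply add_le_add
      · apply Finset.sum_le_sum
        intro j hj
        rw [Finset.mem_singleton] at hj
        subst hj
        apply mul_le_mul_of_nonneg_right _ (h10 i j)
        rw [hcmink]
        have hY : qRS Finset.univ ({j} : Finset M) q₁ = qRj Finset.univ q₁ j := by
          simp [qRS, qRj]
        rw [hY]
        calc cmin c Finset.univ Z ≤ c j Z := hcost j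
          _ ≤ c j (qRj Finset.univ q₁ j) :=
            (hMRS.c_strictAnti j).antitoneOn (hRj0 j) hZ0 (hRjZ j)
      · apply Finset.sum_le_sum
        intro j _
        apply mul_le_mul_of_nonneg_right _ (h10 i j)
        calc cmin c Finset.univ Z ≤ c j Z := hcost j
          _ ≤ c j (qRj Finset.univ q₁ j) :=
            (hMRS.c_strictAnti j).antitoneOn (hRj0 j) hZ0 (hRjZ j)
          _ ≤ w j (qRj Finset.univ q₁ j) := le_of_lt (hMRS.w_gt_c j _ (hRj0 j))
    have h4 : ∑ j ∈ (Finset.univ : Finset M)ᶜ, w j (qRj Finset.univ q₁ j) * q₁ i j = 0 := by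
      simp
    rw [h4]
    linarith
  have hle : v Finset.univ {k} ≤ v Finset.univ Finset.univ := by
    rw [hvk, hvNN]
    calc ∑ i, retProfit p w c Finset.univ ({k} : Finset M) qk i
        ≤ ∑ i, retProfit p w c Finset.univ Finset.univ qk i := hclaim2 qk hqkfeas.1
      _ ≤ ∑ i, retProfit p w c Finset.univ Finset.univ q i := hqopt qk hqkfeas
  have hge : v Finset.univ Finset.univ ≤ v Finset.univ {k} := by
    rw [hvk, hvNN]
    calc ∑ i, retProfit p w c Finset.univ Finset.univ q i
        = ∑ i, retProfit p w c Finset.univ ({k} : Finset M) q' i := hclaim1.symm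
      _ ≤ ∑ i, retProfit p w c Finset.univ ({k} : Finset M) qk i := hqkopt q' hfeas'
  linarith
end

section
/- If an MRS-game (N,M,v) with unbounded production capacity has at least two optimal suppliers (|M^o| ≥ 2), then every core allocation gives zero to every supplier: for all y ∈ Core(N,M,v) and all j ∈ M, y_j = 0. -/
open Finset

/-- If an unbounded MRS-game has at least two optimal suppliers, every core
allocation gives zero to every supplier. -/
theorem stmt_15 {N M : Type*} [Fintype N] [Fintype M] [DecidableEq M]
    (p : N → ℝ → ℝ) (w c : M → ℝ → ℝ) (qstar : N → ℝ)
    (hMRS : MRSAssumptions p w c)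
    (v : Finset N → Finset M → ℝ)
    (hv : ∀ (R : Finset N) (S : Finset M), ∃ q,
      IsOptimalU p w c qstar R S q ∧ v R S = ∑ i ∈ R, retProfit p w c R S q i)
    -- two distinct optimal suppliers
    (j₁ j₂ : M) (hne : j₁ ≠ j₂)
    (hj₁ : v Finset.univ {j₁} = v Finset.univ Finset.univ)
    (hj₂ : v Finset.univ {j₂} = v Finset.univ Finset.univ)
    -- a core allocation y = (yN, yM)
    (yN : N → ℝ) (yM : M → ℝ)
    (hEff : (∑ i, yN i) + (∑ j, yM j) = v Finset.univ Finset.univ)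
    (hStab : ∀ (R : Finset N) (S : Finset M),
      v R S ≤ (∑ i ∈ R, yN i) + ∑ j ∈ S, yM j) :
    ∀ j : M, yM j = 0 := by
  have hv0 : ∀ S : Finset M, v ∅ S = 0 := by
    intro S
    obtain ⟨q, _, h⟩ := hv ∅ S
    simpa using h
  have hnn : ∀ j, 0 ≤ yM j := by
    intro j
    have := hStab ∅ {j}
    simpa [hv0] using this
  have key : ∀ j0 : M, v Finset.univ {j0} = v Finset.univ Finset.univ →
      ∀ j, j ≠ j0 → yM j = 0 := by
    intro j0 hj0 j hjne
    have h1 := hStab Finset.univ {j0}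
    rw [hj0, ← hEff] at h1
    have hsplit : (∑ j, yM j) = yM j0 + ∑ j ∈ {j0}ᶜ, yM j :=
      Fintype.sum_eq_add_sum_compl j0 yM
    have hle : ∑ j ∈ ({j0} : Finset M)ᶜ, yM j ≤ 0 := by
      rw [hsplit] at h1
      simp at h1
      linarith
    have hzero := (Finset.sum_eq_zero_iff_of_nonneg (fun i _ => hnn i)).mp
      (le_antisymm hle (Finset.sum_nonneg fun i _ => hnn i))
    exact hzero j (by simpa using hjne)
  intro j
  by_cases h : j = j₁
  · exact key j₂ hj₂ j (by rw [h]; exact hne)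
  · exact key j₁ hj₁ j h
end
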